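/- arXiv:2004.05942 — 2 statements merged into one kernel-verified Lean document; each statement's English description precedes it below -/
import Mathlib

section
/- Let H be a bipartite graph with parts {v₁,…,v_k} and {w₁,…,w_k}, and let M, M' be perfect matchings of H (regarded as permutations of {1,…,k}). If the symmetric difference of M and M' is a disjoint union of simple cycles C₁,…,C_m whose lengths all satisfy ℓ_i ≡ 2 (mod 4), then sgn(M) = sgn(M'). -/
namespace Equiv.Perm

variable {α : Type*} [Fintype α] [DecidableEq α]

theorem sign_eq_one_of_forall_mem_cycleType_odd {σ : Perm α}
    (h : ∀ n ∈ σ.cycleType, Odd n) : sign σ = 1 := by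
  rw [sign_of_cycleType']
  refine Multiset.prod_eq_one fun u hu => ?_
  obtain ⟨n, hn, rfl⟩ := Multiset.mem_map.mp hu
  rw [(h n hn).neg_one_pow, neg_neg]

theorem sign_eq_sign_of_sign_inv_mul_eq_one {σ τ : Perm α} (h : sign (σ⁻¹ * τ) = 1) :
    sign σ = sign τ := by
  rwa [map_mul, map_inv, inv_mul_eq_one] at h

end Equiv.Perm

theorem stmt11_general {k : ℕ}
    (σ σ' : Equiv.Perm (Fin k))
    (hcyc : ∀ n ∈ (σ⁻¹ * σ').cycleType, (2 * n) % 4 = 2) :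
    Equiv.Perm.sign σ = Equiv.Perm.sign σ' := by
  refine Equiv.Perm.sign_eq_sign_of_sign_inv_mul_eq_one
    (Equiv.Perm.sign_eq_one_of_forall_mem_cycleType_odd fun n hn => ?_)
  have h2n := hcyc n hn
  rw [Nat.odd_iff]
  omega

/-- **Perfect matchings whose symmetric difference consists of cycles of length
`≡ 2 (mod 4)` have the same sign.**
`E` is a bipartite graph on the parts `{v₁,…,v_k}` and `{w₁,…,w_k}` (the value
`E i j` records the edge `{vᵢ, wⱼ}`).  Perfect matchings are regarded as
permutations `σ` of `Fin k` (the matching `{vᵢ, w_{σ i}}`), and the sign of a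
matching is the sign of the corresponding permutation.  A cycle of the
symmetric difference of the matchings `σ`, `σ'` alternates between edges of the
two matchings; a cycle of length `2·n` in the graph corresponds to a cycle of
length `n` of the permutation `σ⁻¹ * σ'`.  If every cycle of the symmetric
difference has length `≡ 2 (mod 4)` (i.e. `(2·n) % 4 = 2` for every cycle
length `n` of `σ⁻¹ * σ'`), then `sgn σ = sgn σ'`. -/
theorem stmt11 {k : ℕ} (E : Fin k → Fin k → Prop)
    (σ σ' : Equiv.Perm (Fin k))
    (hM : ∀ i, E i (σ i)) (hM' : ∀ i, E i (σ' i))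
    (hcyc : ∀ n ∈ (σ⁻¹ * σ').cycleType, (2 * n) % 4 = 2) :
    Equiv.Perm.sign σ = Equiv.Perm.sign σ' :=
  stmt11_general σ σ' hcyc
end

section
/- Under the hypotheses of the triangle-gluing lemma (conditions (i)–(iii)), the total angle at the outer vertices satisfies Σ_{v outer} Σ_{f ∋ v} β(f,v) = (d − 2)π, where d is the number of outer vertices. -/
/-!
Summing all angles face by face gives `|F_inner|·π`. The inner vertices account for
`2π` each, i.e. `(|V| - d)·2π`, and Euler's formula with the handshake identity gives
`|F_inner| = 2|V| - d - 2`; the outer vertices carry the remaining `(d - 2)·π`.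
-/

open Finset

theorem Finset.sum_sum_filter_mem_eq_sum_sum {α ι M : Type*} [Fintype α] [Fintype ι]
    [DecidableEq α] [AddCommMonoid M] (s : ι → Finset α) (g : ι → α → M) :
    ∑ a, ∑ i ∈ univ.filter (fun i => a ∈ s i), g i a = ∑ i, ∑ a ∈ s i, g i a :=
  Finset.sum_comm' (by simp)

theorem stmt17_general {Vt Ft : Type} [Fintype Vt] [Fintype Ft] [DecidableEq Vt]
    (d : ℕ) (outer : Finset Vt) (hd : outer.card = d)
    (inc : Ft → Finset Vt) (β : Ft → Vt → ℝ) (numEdges : ℕ)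
    (hsum : ∀ f, ∑ v ∈ inc f, β f v = Real.pi)
    (hin : ∀ v, v ∉ outer →
      ∑ f ∈ Finset.univ.filter (fun f : Ft => v ∈ inc f), β f v = 2 * Real.pi)
    (hEuler : (Fintype.card Vt : ℤ) - numEdges + (Fintype.card Ft + 1) = 2)
    (hHandshake : 3 * (Fintype.card Ft : ℤ) = 2 * numEdges - d) :
    ∑ v ∈ outer, ∑ f ∈ Finset.univ.filter (fun f : Ft => v ∈ inc f), β f v =
      ((d : ℝ) - 2) * Real.pi := by
  have htotal : ∑ v, ∑ f ∈ univ.filter (fun f => v ∈ inc f), β f v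
      = Fintype.card Ft * Real.pi := by
    simp [Finset.sum_sum_filter_mem_eq_sum_sum, hsum]
  have hinner : ∑ v ∈ outerᶜ, ∑ f ∈ univ.filter (fun f => v ∈ inc f), β f v
      = ((Fintype.card Vt : ℝ) - d) * (2 * Real.pi) := by
    rw [sum_congr rfl fun v hv => hin v (mem_compl.mp hv), sum_const, card_compl, hd,
      nsmul_eq_mul, Nat.cast_sub (hd ▸ card_le_univ outer)]
  have hfaces : (Fintype.card Ft : ℝ) = 2 * Fintype.card Vt - d - 2 := by
    exact_mod_cast (by omega : (Fintype.card Ft : ℤ) = 2 * Fintype.card Vt - d - 2)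
  rw [← sum_add_sum_compl outer, hinner, hfaces] at htotal
  linarith

/-- **Total angle at the outer vertices.**
Let `H` be an inner triangulation of a `d`-gon (`Vt` its vertices, `outer` the
set of outer vertices with `outer.card = d`, `Ft` its inner faces, `inc f` the
three vertices of the inner face `f`, `numEdges` its number of edges), and let
each inner face `f` carry a triangle `T_f` with inner angle `β f v` at each
vertex `v ∈ inc f`, so that the angles of each triangle sum to `π`.
Assume condition (i): at every inner vertex the angles of the incident
triangles sum to `2π`; and record planarity by Euler's formula
`|V| - |E| + (|F_inner| + 1) = 2` and the triangle handshake
`3·|F_inner| = 2·|E| - d`.  Then the total angle at the outer vertices is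
`(d - 2)·π`. -/
theorem stmt17 {Vt Ft : Type} [Fintype Vt] [Fintype Ft] [DecidableEq Vt]
    (d : ℕ) (hd3 : 3 ≤ d) (outer : Finset Vt) (hd : outer.card = d)
    (inc : Ft → Finset Vt) (β : Ft → Vt → ℝ) (numEdges : ℕ)
    (htri : ∀ f, (inc f).card = 3)
    (hsum : ∀ f, ∑ v ∈ inc f, β f v = Real.pi)
    (hin : ∀ v, v ∉ outer →
      ∑ f ∈ Finset.univ.filter (fun f : Ft => v ∈ inc f), β f v = 2 * Real.pi)
    (hEuler : (Fintype.card Vt : ℤ) - numEdges + (Fintype.card Ft + 1) = 2)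
    (hHandshake : 3 * (Fintype.card Ft : ℤ) = 2 * numEdges - d) :
    ∑ v ∈ outer, ∑ f ∈ Finset.univ.filter (fun f : Ft => v ∈ inc f), β f v =
      ((d : ℝ) - 2) * Real.pi :=
  stmt17_general d outer hd inc β numEdges hsum hin hEuler hHandshake
end
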